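/- With f as in the previous construction (piecewise affine convex function with breakpoints α_n = 1/(n+1)! and slopes α_{n+1} on (α_{n+1}, α_n], extended evenly), the point x̄ = 0 is the global minimizer of f, but the quadratic growth condition fails at 0: for every κ > 0 and γ > 0 there exists x with 0 < |x| ≤ γ and f(x) − f(0) < (κ/2)x². -/
import Mathlib


open Nat

/-- `α n = 1/(n+1)!`. -/
noncomputable def alph (n : ℕ) : ℝ := 1 / ((n + 1)! : ℝ)

/-- `β 0 = 0`, `β (n+1) = ∑_{k=0}^{n} 1/(k!(k+2)!)`. -/
noncomputable def bet (n : ℕ) : ℝ := ∑ k ∈ Finset.range n, 1 / ((k ! : ℝ) * ((k + 2)! : ℝ))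

/-- `β = lim β n = ∑_{k=0}^{∞} 1/(k!(k+2)!)`. -/
noncomputable def betLim : ℝ := ∑' k : ℕ, 1 / ((k ! : ℝ) * ((k + 2)! : ℝ))

open Filter

lemma alph_pos (n : ℕ) : 0 < alph n := by
  unfold alph; positivity

lemma alph_zero : alph 0 = 1 := by simp [alph]

lemma alph_succ (n : ℕ) : alph (n+1) = alph n / (n+2) := by
  unfold alph
  rw [show (n+1+1) = (n+2) by ring, Nat.factorial_succ]
  push_cast
  rw [div_div]
  ring_nf

lemma alph_lt (n : ℕ) : alph (n+1) < alph n := by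
  rw [alph_succ]
  have h := alph_pos n
  rw [div_lt_iff₀ (by positivity : (0:ℝ) < (n:ℝ)+2)]
  nlinarith

lemma alph_anti : ∀ {m n : ℕ}, m ≤ n → alph n ≤ alph m := by
  intro m n h
  induction h with
  | refl => exact le_refl _
  | step h ih => exact le_trans (alph_lt _).le ih

lemma alph_le (n : ℕ) : alph n ≤ 1 / (n+1 : ℝ) := by
  unfold alph
  apply div_le_div_of_nonneg_left one_pos.le (by positivity)
  exact_mod_cast Nat.self_le_factorial (n+1)

lemma term_eq (k : ℕ) : 1 / ((k ! : ℝ) * ((k + 2)! : ℝ)) = alph k * (alph k - alph (k+1)) := by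
  unfold alph
  rw [show k+1+1 = k+2 by ring, Nat.factorial_succ (k+1), Nat.factorial_succ k]
  have h1 : (0:ℝ) < (k ! : ℝ) := by positivity
  push_cast
  field_simp
  ring

lemma term_nonneg (k : ℕ) : (0:ℝ) ≤ 1 / ((k ! : ℝ) * ((k + 2)! : ℝ)) := by positivity

lemma summable_term : Summable (fun k : ℕ => 1 / ((k ! : ℝ) * ((k + 2)! : ℝ))) := by
  have hs : Summable (fun n : ℕ => 1 / (n ! : ℝ)) :=
    (Real.summable_pow_div_factorial 1).congr (fun n => by norm_num)
  apply Summable.of_nonneg_of_le term_nonneg (fun k => ?_) hs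
  rw [div_le_div_iff₀ (by positivity) (by positivity)]
  have h2 : (1:ℝ) ≤ ((k+2)! : ℝ) := by exact_mod_cast Nat.one_le_iff_ne_zero.2 (Nat.factorial_ne_zero _)
  nlinarith [show (0:ℝ) < (k ! : ℝ) by positivity]

lemma tendsto_bet : Tendsto bet atTop (nhds betLim) :=
  summable_term.hasSum.tendsto_sum_nat

lemma tendsto_alph : Tendsto alph atTop (nhds 0) := by
  apply squeeze_zero (fun n => (alph_pos n).le) alph_le
  exact tendsto_one_div_add_atTop_nhds_zero_nat

lemma bet_le_betLim (n : ℕ) : bet n ≤ betLim :=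
  Summable.sum_le_tsum (Finset.range n) (fun k _ => term_nonneg k) summable_term

lemma key (N : ℕ) : ∀ m, N ≤ m → bet m ≤ bet N + alph N * (alph N - alph m) := by
  intro m h
  induction h with
  | refl => simp
  | @step m h ih =>
    have hm : alph m ≤ alph N := alph_anti h
    have hd : 0 ≤ alph m - alph (m+1) := sub_nonneg.2 (alph_lt m).le
    have hb : bet (m+1) = bet m + 1 / ((m ! : ℝ) * ((m + 2)! : ℝ)) := Finset.sum_range_succ _ m
    rw [hb, term_eq]
    nlinarith [alph_pos m, alph_pos N]

lemma betLim_le (N : ℕ) : betLim ≤ bet N + alph N * alph N := by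
  have h1 : Tendsto (fun m => bet N + alph N * (alph N - alph m)) atTop
      (nhds (bet N + alph N * (alph N - 0))) :=
    Tendsto.const_add _ (Tendsto.const_mul _ (tendsto_const_nhds.sub tendsto_alph))
  rw [sub_zero] at h1
  exact le_of_tendsto_of_tendsto tendsto_bet h1 (eventually_atTop.2 ⟨N, key N⟩)

/-- The piecewise affine function of Example 3.5: `f(x) = x` for `x > 1`,
`f(x) = α_{n+1} x + β_{n+1}` on `(α_{n+1}, α_n]`, `f(0) = β`, `f(x) = f(-x)` for `x < 0`.
Then `0` is the global minimizer of `f` but the quadratic growth condition fails at `0`. -/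
theorem stmt9 (f : ℝ → ℝ)
    (h1 : ∀ x : ℝ, 1 < x → f x = x)
    (h2 : ∀ n : ℕ, ∀ x : ℝ, alph (n + 1) < x → x ≤ alph n → f x = alph (n + 1) * x + bet (n + 1))
    (h3 : f 0 = betLim)
    (h4 : ∀ x : ℝ, x < 0 → f x = f (-x)) :
    (∀ x : ℝ, f 0 ≤ f x) ∧
      ∀ κ > (0 : ℝ), ∀ γ > (0 : ℝ), ∃ x : ℝ, 0 < |x| ∧ |x| ≤ γ ∧ f x - f 0 < κ / 2 * x ^ 2 := by
  classical
  have bet0 : bet 0 = 0 := by simp [bet]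
  have hbl1 : betLim ≤ 1 := by
    have := betLim_le 0
    rw [bet0, alph_zero] at this
    linarith
  have aux : ∀ x : ℝ, 0 < x → betLim ≤ f x := by
    intro x hx
    rcases lt_or_ge 1 x with hx1 | hx1
    · rw [h1 x hx1]; linarith
    · -- find m with alph m < x
      obtain ⟨m, hm⟩ := exists_nat_gt (1 / x)
      have hmx : alph m < x := by
        refine lt_of_le_of_lt (alph_le m) ?_
        rw [div_lt_iff₀ (by positivity)]
        rw [div_lt_iff₀ hx] at hm
        nlinarith [m.cast_nonneg (α := ℝ)]
      have hex : ∃ k, alph k < x := ⟨m, hmx⟩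
      set n0 := Nat.find hex with hn0
      have hfind : alph n0 < x := Nat.find_spec hex
      have hne : n0 ≠ 0 := by
        intro h0
        rw [h0, alph_zero] at hfind
        linarith
      obtain ⟨n, hn⟩ := Nat.exists_eq_succ_of_ne_zero hne
      have hxle : x ≤ alph n := by
        have := Nat.find_min hex (by omega : n < n0)
        linarith [not_lt.mp this]
      have hfind' : alph (n + 1) < x := by rw [← Nat.succ_eq_add_one, ← hn]; exact hfind
      rw [h2 n x hfind' hxle]
      have hb := betLim_le (n + 1)
      nlinarith [alph_pos (n + 1), hfind']
  constructor
  · intro x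
    rcases lt_trichotomy x 0 with hx | hx | hx
    · rw [h4 x hx, h3]; exact aux (-x) (by linarith)
    · rw [hx]
    · rw [h3]; exact aux x hx
  · intro κ hκ γ hγ
    obtain ⟨n, hn⟩ := exists_nat_gt (max (2 / κ) (1 / γ))
    have hn1 : 2 / κ < (n : ℝ) := lt_of_le_of_lt (le_max_left _ _) hn
    have hn2 : 1 / γ < (n : ℝ) := lt_of_le_of_lt (le_max_right _ _) hn
    refine ⟨alph n, ?_, ?_, ?_⟩
    · rw [abs_pos]; exact (alph_pos n).ne'
    · rw [abs_of_pos (alph_pos n)]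
      refine le_trans (alph_le n) ?_
      rw [div_le_iff₀ (by positivity)]
      rw [div_lt_iff₀ hγ] at hn2
      nlinarith
    · rw [h2 n (alph n) (alph_lt n) le_rfl, h3]
      have hb := bet_le_betLim (n + 1)
      have hs : alph (n + 1) = alph n / (n + 2) := alph_succ n
      have hc : 1 / ((n : ℝ) + 2) < κ / 2 := by
        rw [div_lt_iff₀ hκ] at hn1
        rw [div_lt_div_iff₀ (by positivity) (by norm_num)]
        nlinarith
      have hlt : alph (n + 1) * alph n < κ / 2 * alph n ^ 2 := by
        rw [hs]
        have h0 := alph_pos n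
        rw [pow_two, div_mul_eq_mul_div, div_lt_iff₀ (by positivity : (0:ℝ) < (n:ℝ)+2)]
        rw [div_lt_div_iff₀ (by positivity) (by norm_num : (0:ℝ) < 2)] at hc
        nlinarith [mul_pos (mul_pos h0 h0) (show (0:ℝ) < κ * ((n:ℝ)+2) - 2 by linarith)]
      linarith
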